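/- In the frequency-domain model of an LCMT, assume additionally that h m ω ≠ 0 for every node m ≠ r and every ω ∈ ℝ, and that the coherence functions ω ↦ C(X i ω, X j ω) are measurable for all pairs of nodes i, j. Let T be the tree on V with edge set { {j, par j} : j ≠ r }. Then T is the unique minimum spanning tree for the coherence distance d: for every tree T' on V (connected acyclic simple graph on the vertex set V) with T' ≠ T, the sum of d over the edges of T' is strictly greater than the sum of d over the edges of T. -/

import Mathlib

open scoped InnerProductSpace

/-- The coherence of two vectors of a complex inner product space
(inner product conjugate-linear in the first argument):
`C(u, v) = ‖⟪u, v⟫‖² / (‖u‖² · ‖v‖²)`. -/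
noncomputable def coherence {H : Type*} [NormedAddCommGroup H]
    [InnerProductSpace ℂ H] (u v : H) : ℝ :=
  ‖⟪u, v⟫_ℂ‖ ^ 2 / (‖u‖ ^ 2 * ‖v‖ ^ 2)

/-- The coherence-based distance between two frequency-indexed families of
vectors: `d(f, g) = ( (1/(2π)) ∫_{-π}^{π} (1 − C(f ω, g ω)) dω )^{1/2}`. -/
noncomputable def cohDist {H : Type*} [NormedAddCommGroup H]
    [InnerProductSpace ℂ H] (f g : ℝ → H) : ℝ :=
  Real.sqrt ((1 / (2 * Real.pi)) *
    ∫ ω in (-Real.pi)..Real.pi, (1 - coherence (f ω) (g ω)))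

/-- The coherence-based distance is symmetric, so it induces a well-defined
weight on undirected edges. -/
theorem cohDist_symm {H : Type*} [NormedAddCommGroup H]
    [InnerProductSpace ℂ H] (f g : ℝ → H) : cohDist f g = cohDist g f := by
  unfold cohDist coherence
  congr 1
  congr 1
  apply intervalIntegral.integral_congr
  intro ω _
  simp only []
  rw [norm_inner_symm (𝕜 := ℂ) (f ω) (g ω), mul_comm]

/-- The total weight of (the edges of) a simple graph on a finite vertex type,
with respect to a symmetric weight function `w`. -/
noncomputable def graphWeight {V : Type*} [Fintype V]
    (w : V → V → ℝ) (hw : ∀ a b, w a b = w b a) (G : SimpleGraph V) : ℝ :=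
  ∑ e ∈ (Set.toFinite G.edgeSet).toFinset, Sym2.lift ⟨w, hw⟩ e

/-!
The parent graph `T` of a rooted parent map is a tree, and deleting its edge `{a, par a}`
separates exactly the pairs `{i, j}` for which `a` is an ancestor of one node but not of the
other. At a fixed frequency, orthogonality of the noises makes coherence multiplicative along
tree paths: for such a pair, `C(i, j) = C(i, a) · C(a, par a) · C(par a, j)`. Since the noise
of a node is never explained by its parent, coherences between distinct nodes are `< 1`, so
`C(i, j) < C(a, par a)` unless `{i, j}` is the edge itself; integrating over frequencies,
`d(a, par a) < d(i, j)`. This strict cut property makes `T` the unique minimum spanning tree by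
the usual exchange argument: an edge of another tree `T'` outside `T` can be swapped for a
strictly lighter edge of `T`, bringing `T'` closer to `T`.
-/

namespace SimpleGraph

open Finset

variable {V : Type*} {G T T' : SimpleGraph V}

theorem Reachable.deleteEdges_or {v x : V} (hvx : G.Reachable v x) (y : V) :
    (G.deleteEdges {s(x, y)}).Reachable v x ∨ (G.deleteEdges {s(x, y)}).Reachable v y := by
  obtain ⟨p⟩ := hvx
  induction p with
  | nil => exact Or.inl .rfl
  | @cons v m x hvm p ih =>
    by_cases hvm' : s(v, m) = s(x, y)
    · rcases Sym2.eq_iff.mp hvm' with ⟨rfl, -⟩ | ⟨rfl, -⟩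
      · exact Or.inl .rfl
      · exact Or.inr .rfl
    · have hadj : (G.deleteEdges {s(x, y)}).Adj v m := by simp [hvm, hvm']
      exact ih.imp hadj.reachable.trans hadj.reachable.trans

theorem IsTree.eq_of_le (hT : T.IsTree) (hT' : T'.IsTree) (hle : T' ≤ T) : T' = T :=
  le_antisymm hle ((isTree_iff_maximal_isAcyclic.mp hT').2.le_of_ge hT.isAcyclic hle)

theorem IsTree.exists_exchange (hT : T.IsTree) (hT' : T'.IsTree) {x y : V}
    (hxy : T'.Adj x y) (hxyT : ¬T.Adj x y) :
    ∃ a b, T.Adj a b ∧ ¬T'.Adj a b ∧ ¬(T.deleteEdges {s(a, b)}).Reachable x y ∧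
      (T'.deleteEdges {s(x, y)} ⊔ edge a b).IsTree := by
  classical
  set F := T'.deleteEdges {s(x, y)}
  have hF : ¬F.Reachable x y := isAcyclic_iff_forall_adj_isBridge.mp hT'.isAcyclic hxy
  obtain ⟨p, hp⟩ := hT.connected.exists_isPath x y
  obtain ⟨⟨⟨a, b⟩, hab⟩, hd, ha, hb⟩ :=
    p.exists_boundary_dart {v | F.Reachable x v} .rfl hF
  simp only [Set.mem_ofPred_eq] at ha hb
  have hFab : ¬F.Reachable a b := fun h => hb (ha.trans h)
  have hby : F.Reachable b y :=
    ((hT'.connected.preconnected b x).deleteEdges_or y).resolve_left fun h => hb h.symm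
  refine ⟨a, b, hab, fun h => hFab ?_, ?_, ?_, ?_⟩
  · refine (deleteEdges_adj.mpr ⟨h, ?_⟩).reachable
    rintro heq
    exact hxyT (by rwa [← mem_edgeSet, ← Set.mem_singleton_iff.mp heq])
  · rw [reachable_deleteEdges_iff_exists_walk]
    rintro ⟨q, hq⟩
    have hpq : (⟨p, hp⟩ : T.Path x y) = q.toPath :=
      (hT.isAcyclic.subsingleton_path x y).elim _ _
    refine hq (q.edges_toPath_subset_edges ?_)
    rw [← hpq]
    exact List.mem_map_of_mem hd
  · rw [connected_iff_exists_forall_reachable]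
    have hle : F ≤ F ⊔ edge a b := le_sup_left
    have hab' : (F ⊔ edge a b).Adj a b := Or.inr (by simp [adj_edge, hab.ne])
    have hxy' : (F ⊔ edge a b).Reachable x y :=
      (ha.mono hle).trans (hab'.reachable.trans (hby.mono hle))
    refine ⟨x, fun v => ?_⟩
    rcases (hT'.connected.preconnected v x).deleteEdges_or y with h | h
    · exact (h.mono hle).symm
    · exact hxy'.trans (h.mono hle).symm
  · exact (hT'.isAcyclic.anti (deleteEdges_le _)).sup_edge_of_not_reachable hFab

variable [Fintype V] {w : V → V → ℝ} {hw : ∀ a b, w a b = w b a}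

theorem graphWeight_eq_sum_edgeFinset (G : SimpleGraph V) [Fintype G.edgeSet] :
    graphWeight w hw G = ∑ e ∈ G.edgeFinset, Sym2.lift ⟨w, hw⟩ e := by
  rw [graphWeight, Set.Finite.toFinset_eq_toFinset]
  rfl

theorem graphWeight_exchange {x y a b : V} (hxy : G.Adj x y) (hab : a ≠ b) (hnab : ¬G.Adj a b) :
    graphWeight w hw (G.deleteEdges {s(x, y)} ⊔ edge a b) =
      graphWeight w hw G - w x y + w a b := by
  classical
  have hdel : (G.deleteEdges {s(x, y)}).edgeFinset = G.edgeFinset.erase s(x, y) := by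
    ext e
    simp [and_comm]
  rw [graphWeight_eq_sum_edgeFinset, graphWeight_eq_sum_edgeFinset,
    edgeFinset_sup_edge _ (fun h => hnab (deleteEdges_le _ h)) hab, sum_cons, hdel,
    sum_erase_eq_sub (mem_edgeFinset.mpr hxy)]
  simp only [Sym2.lift_mk]
  ring

theorem IsTree.graphWeight_lt_of_ne (hT : T.IsTree)
    (hcut : ∀ e ∈ T.edgeSet, ∀ x y, s(x, y) ≠ e → ¬(T.deleteEdges {e}).Reachable x y →
      Sym2.lift ⟨w, hw⟩ e < w x y)
    (hT' : T'.IsTree) (hne : T' ≠ T) : graphWeight w hw T < graphWeight w hw T' := by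
  classical
  induction hn : #(T'.edgeFinset \ T.edgeFinset) using Nat.strong_induction_on generalizing T'
    with | _ n ih =>
  obtain ⟨x, y, hxy, hxyT⟩ : ∃ x y, T'.Adj x y ∧ ¬T.Adj x y := by
    by_contra! h
    exact hne (hT.eq_of_le hT' fun x y => h x y)
  obtain ⟨a, b, hab, habT', hsep, hT''⟩ := hT.exists_exchange hT' hxy hxyT
  have hlt : graphWeight w hw (T'.deleteEdges {s(x, y)} ⊔ edge a b) < graphWeight w hw T' := by
    have := hcut s(a, b) hab x y (fun h => hxyT (by rwa [← mem_edgeSet, h])) hsep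
    rw [graphWeight_exchange hxy hab.ne habT']
    simp only [Sym2.lift_mk] at this
    linarith
  rcases eq_or_ne (T'.deleteEdges {s(x, y)} ⊔ edge a b) T with h | h
  · rwa [h] at hlt
  refine (ih _ ?_ hT'' h rfl).trans hlt
  rw [← hn]
  refine card_lt_card ((ssubset_iff_of_subset ?_).mpr ⟨s(x, y), ?_, ?_⟩)
  · intro e he
    simp only [mem_sdiff, mem_edgeFinset, edgeSet_sup, edgeSet_deleteEdges, edgeSet_edge] at he ⊢
    obtain ⟨⟨he', -⟩ | ⟨rfl, -⟩, heT⟩ := he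
    exacts [⟨he', heT⟩, absurd hab heT]
  · simp [hxy, hxyT]
  · simp only [mem_sdiff, mem_edgeFinset, edgeSet_sup, edgeSet_deleteEdges, edgeSet_edge]
    rintro ⟨⟨-, hxy'⟩ | ⟨hxy', -⟩, -⟩
    · exact hxy' rfl
    · exact hxyT (by rwa [← mem_edgeSet, Set.mem_singleton_iff.mp hxy'])

end SimpleGraph

section RootedTree

variable {V : Type*} {par : V → V} {r : V}

def ancestors (par : V → V) (v : V) : Set V := Set.range fun n => par^[n] v

theorem self_mem_ancestors (par : V → V) (v : V) : v ∈ ancestors par v := ⟨0, rfl⟩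

theorem mem_ancestors_iff {a v : V} :
    a ∈ ancestors par v ↔ a = v ∨ a ∈ ancestors par (par v) := by
  constructor
  · rintro ⟨_ | n, rfl⟩
    exacts [Or.inl rfl, Or.inr ⟨n, (Function.iterate_succ_apply par n v).symm⟩]
  · rintro (rfl | ⟨n, rfl⟩)
    exacts [self_mem_ancestors par a, ⟨n + 1, Function.iterate_succ_apply par n v⟩]

theorem mem_ancestors_of_mem_ancestors_par {a v : V} (ha : a ∈ ancestors par (par v)) :
    a ∈ ancestors par v :=
  mem_ancestors_iff.mpr (Or.inr ha)

theorem mem_ancestors_trans {a b v : V} (hab : a ∈ ancestors par b)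
    (hbv : b ∈ ancestors par v) : a ∈ ancestors par v := by
  obtain ⟨m, rfl⟩ := hab
  obtain ⟨n, rfl⟩ := hbv
  exact ⟨m + n, Function.iterate_add_apply par m n v⟩

structure IsRooted (par : V → V) (r : V) : Prop where
  map_root : par r = r
  exists_iterate_eq_root : ∀ v, ∃ n, par^[n] v = r

namespace IsRooted

variable (hr : IsRooted par r)
include hr

theorem root_mem_ancestors (v : V) : r ∈ ancestors par v := hr.exists_iterate_eq_root v

theorem mem_ancestors_root_iff {a : V} : a ∈ ancestors par r ↔ a = r := by
  refine ⟨?_, fun h => h ▸ self_mem_ancestors par r⟩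
  rintro ⟨n, rfl⟩
  exact Function.iterate_fixed hr.map_root n

theorem eq_root_of_iterate_eq {v : V} {k : ℕ} (hk : k ≠ 0) (hv : par^[k] v = v) : v = r := by
  obtain ⟨n, hn⟩ := hr.exists_iterate_eq_root v
  have hper : Function.IsPeriodicPt par k v := hv
  calc v = par^[k * n] v := (hper.mul_const n).eq.symm
    _ = par^[(k * n - n) + n] v := by
      rw [Nat.sub_add_cancel (Nat.le_mul_of_pos_left n (Nat.pos_of_ne_zero hk))]
    _ = r := by rw [Function.iterate_add_apply, hn, Function.iterate_fixed hr.map_root]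

theorem map_ne_self {v : V} (hv : v ≠ r) : par v ≠ v :=
  fun h => hv (hr.eq_root_of_iterate_eq one_ne_zero h)

theorem not_mem_ancestors_map {v : V} (hv : v ≠ r) : v ∉ ancestors par (par v) := by
  rintro ⟨n, hn⟩
  exact hv (hr.eq_root_of_iterate_eq n.succ_ne_zero (by rwa [Function.iterate_succ_apply]))

theorem eq_of_mem_ancestors_of_mem_ancestors {a v : V} (hav : a ∈ ancestors par v)
    (hva : v ∈ ancestors par a) : a = v := by
  obtain ⟨m, rfl⟩ := hav
  obtain ⟨n, hn⟩ := hva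
  rcases Nat.eq_zero_or_pos m with rfl | hm
  · rfl
  obtain rfl : v = r :=
    hr.eq_root_of_iterate_eq (k := n + m) (by omega) (by rwa [Function.iterate_add_apply])
  exact Function.iterate_fixed hr.map_root m

theorem induction {P : V → Prop} (root : P r) (step : ∀ v, v ≠ r → P (par v) → P v)
    (v : V) : P v := by
  obtain ⟨n, hn⟩ := hr.exists_iterate_eq_root v
  induction n generalizing v with
  | zero => rwa [show v = r from hn]
  | succ n ih =>
    by_cases hv : v = r
    · exact hv ▸ root
    · exact step v hv (ih _ (by rwa [← Function.iterate_succ_apply]))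

end IsRooted

end RootedTree

section ParentGraph

open SimpleGraph

variable {V : Type*} {par : V → V} {r : V}

def parentGraph (par : V → V) : SimpleGraph V := SimpleGraph.fromRel fun a b => par a = b

theorem parentGraph_adj {u v : V} :
    (parentGraph par).Adj u v ↔ u ≠ v ∧ (par u = v ∨ par v = u) :=
  fromRel_adj _ u v

namespace IsRooted

variable (hr : IsRooted par r)
include hr

theorem parentGraph_adj_map {v : V} (hv : v ≠ r) : (parentGraph par).Adj v (par v) :=
  parentGraph_adj.mpr ⟨(hr.map_ne_self hv).symm, Or.inl rfl⟩

theorem exists_eq_of_mem_edgeSet_parentGraph {e : Sym2 V} (he : e ∈ (parentGraph par).edgeSet) :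
    ∃ c, c ≠ r ∧ e = s(c, par c) := by
  induction e with | h u v =>
  obtain ⟨huv, rfl | rfl⟩ := parentGraph_adj.mp (mem_edgeSet _ |>.mp he)
  · exact ⟨u, fun h => huv (by rw [h, hr.map_root]), rfl⟩
  · exact ⟨v, fun h => huv (by rw [h, hr.map_root]), Sym2.eq_swap⟩

theorem adj_deleteEdges_parentGraph {a v : V} (hv : v ≠ r) (hva : v ≠ a) :
    ((parentGraph par).deleteEdges {s(a, par a)}).Adj v (par v) := by
  refine deleteEdges_adj.mpr ⟨hr.parentGraph_adj_map hv, ?_⟩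
  rintro h
  obtain ⟨rfl, -⟩ | ⟨rfl, h⟩ := Sym2.eq_iff.mp (Set.mem_singleton_iff.mp h)
  · exact hva rfl
  · -- `par` would swap `a` and `par a`, making `a` periodic, hence the root
    obtain rfl := hr.eq_root_of_iterate_eq (k := 2) two_ne_zero h
    exact hv hr.map_root

theorem reachable_deleteEdges_parentGraph_iff (a x y : V) :
    ((parentGraph par).deleteEdges {s(a, par a)}).Reachable x y ↔
      (a ∈ ancestors par x ↔ a ∈ ancestors par y) := by
  set G := (parentGraph par).deleteEdges {s(a, par a)}
  constructor
  · have step : ∀ c, s(c, par c) ≠ s(a, par a) →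
        (a ∈ ancestors par c ↔ a ∈ ancestors par (par c)) := fun c hc => by
        rw [mem_ancestors_iff (v := c), or_iff_right]
        rintro rfl
        exact hc rfl
    intro h
    rw [reachable_iff_reflTransGen] at h
    induction h with
    | refl => rfl
    | tail _ hcd ih =>
      obtain ⟨hcd, hne⟩ := deleteEdges_adj.mp hcd
      obtain ⟨-, rfl | rfl⟩ := parentGraph_adj.mp hcd
      · exact ih.trans (step _ hne)
      · exact ih.trans (step _ (by rwa [Sym2.eq_swap])).symm
  · have reach_a : ∀ v, a ∈ ancestors par v → G.Reachable v a := by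
      refine hr.induction (fun h => (hr.mem_ancestors_root_iff.mp h) ▸ .rfl) fun v hv ih hav => ?_
      rcases eq_or_ne v a with rfl | hva
      · rfl
      · exact (hr.adj_deleteEdges_parentGraph hv hva).reachable.trans
          (ih ((mem_ancestors_iff.mp hav).resolve_left hva.symm))
    have reach_r : ∀ v, a ∉ ancestors par v → G.Reachable v r := by
      refine hr.induction (fun _ => .rfl) fun v hv ih hav => ?_
      have hva : v ≠ a := fun h => hav (h ▸ self_mem_ancestors par v)
      exact (hr.adj_deleteEdges_parentGraph hv hva).reachable.trans
        (ih fun h => hav (mem_ancestors_of_mem_ancestors_par h))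
    intro hxy
    by_cases hx : a ∈ ancestors par x
    · exact (reach_a x hx).trans (reach_a y (hxy.mp hx)).symm
    · exact (reach_r x hx).trans (reach_r y (hx ∘ hxy.mpr)).symm

theorem isTree_parentGraph : (parentGraph par).IsTree := by
  refine ⟨(connected_iff_exists_forall_reachable _).mpr ⟨r, fun v => ?_⟩, ?_⟩
  · refine (hr.induction (P := fun v => (parentGraph par).Reachable v r) .rfl
      (fun v hv ih => (hr.parentGraph_adj_map hv).reachable.trans ih) v).symm
  · refine isAcyclic_iff_forall_isBridge.mpr fun e he => ?_
    obtain ⟨c, hc, rfl⟩ := hr.exists_eq_of_mem_edgeSet_parentGraph he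
    rw [isBridge_iff, hr.reachable_deleteEdges_parentGraph_iff]
    exact fun h => hr.not_mem_ancestors_map hc (h.mp (self_mem_ancestors par c))

end IsRooted

end ParentGraph

section Coherence

variable {H : Type*} [NormedAddCommGroup H] [InnerProductSpace ℂ H]

theorem coherence_nonneg (u v : H) : 0 ≤ coherence u v := by
  unfold coherence
  positivity

theorem coherence_comm (u v : H) : coherence u v = coherence v u := by
  rw [coherence, coherence, norm_inner_symm, mul_comm]

theorem coherence_le_one (u v : H) : coherence u v ≤ 1 := by
  refine div_le_one_of_le₀ ?_ (by positivity)
  rw [← mul_pow]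
  exact pow_le_pow_left₀ (norm_nonneg _) (norm_inner_le_norm u v) 2

theorem coherence_self {u : H} (hu : u ≠ 0) : coherence u u = 1 := by
  have : ‖u‖ ≠ 0 := norm_ne_zero_iff.mpr hu
  rw [coherence, inner_self_eq_norm_sq_to_K, norm_pow, RCLike.norm_ofReal, abs_norm]
  field_simp

end Coherence

section Cascade

variable {V H : Type*} [NormedAddCommGroup H] [InnerProductSpace ℂ H]

/-- The LCMT at a single frequency `ω`: gains `g = h · ω`, noises `e = ρ · ω`, signals
`x = X · ω`. -/
structure IsCascade (par : V → V) (r : V) (g : V → ℂ) (e x : V → H) : Prop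
    extends IsRooted par r where
  inner_noise : Pairwise fun i j => ⟪e i, e j⟫_ℂ = 0
  signal_root : x r = e r
  signal_step : ∀ j, j ≠ r → x j = g j • x (par j) + e j

namespace IsCascade

variable {par : V → V} {r : V} {g : V → ℂ} {e x : V → H} (hc : IsCascade par r g e x)
include hc

theorem inner_signal_noise_eq_zero (m j : V) :
    j ∉ ancestors par m → ⟪x m, e j⟫_ℂ = 0 := by
  refine hc.induction (P := fun m => j ∉ ancestors par m → ⟪x m, e j⟫_ℂ = 0)
    (fun hj => ?_) (fun m hm ih hj => ?_) m
  · rw [hc.signal_root]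
    exact hc.inner_noise fun h => hj (h ▸ self_mem_ancestors par r)
  · rw [hc.signal_step m hm, inner_add_left, inner_smul_left,
      ih fun h => hj (mem_ancestors_of_mem_ancestors_par h),
      hc.inner_noise fun h : m = j => hj (h ▸ self_mem_ancestors par m), mul_zero, add_zero]

theorem inner_signal_eq {i k : V} (hk : k ≠ r) (hki : k ∉ ancestors par i) :
    ⟪x i, x k⟫_ℂ = g k * ⟪x i, x (par k)⟫_ℂ := by
  rw [hc.signal_step k hk, inner_add_right, inner_smul_right,
    hc.inner_signal_noise_eq_zero i k hki, add_zero]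

theorem norm_signal_sq {k : V} (hk : k ≠ r) :
    ‖x k‖ ^ 2 = ‖g k‖ ^ 2 * ‖x (par k)‖ ^ 2 + ‖e k‖ ^ 2 := by
  have horth : ⟪g k • x (par k), e k⟫_ℂ = 0 := by
    rw [inner_smul_left, hc.inner_signal_noise_eq_zero _ _ (hc.not_mem_ancestors_map hk), mul_zero]
  rw [hc.signal_step k hk, sq, norm_add_sq_eq_norm_sq_add_norm_sq_of_inner_eq_zero _ _ horth,
    norm_smul]
  ring

variable (he : ∀ j, e j ≠ 0)
include he

theorem signal_ne_zero (m : V) : x m ≠ 0 := by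
  rcases eq_or_ne m r with rfl | hm
  · rw [hc.signal_root]
    exact he m
  · have : 0 < ‖e m‖ := norm_pos_iff.mpr (he m)
    have : 0 < ‖x m‖ ^ 2 := by
      rw [hc.norm_signal_sq hm]
      positivity
    exact norm_ne_zero_iff.mp (sq_pos_iff.mp this)

theorem coherence_par {k : V} (hk : k ≠ r) :
    coherence (x k) (x (par k)) = ‖g k‖ ^ 2 * ‖x (par k)‖ ^ 2 / ‖x k‖ ^ 2 := by
  have : ‖x (par k)‖ ≠ 0 := norm_ne_zero_iff.mpr (hc.signal_ne_zero he _)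
  rw [coherence, norm_inner_symm, hc.inner_signal_eq hk (hc.not_mem_ancestors_map hk), norm_mul,
    inner_self_eq_norm_sq_to_K, norm_pow, RCLike.norm_ofReal, abs_norm]
  field_simp

theorem coherence_par_lt_one {k : V} (hk : k ≠ r) : coherence (x k) (x (par k)) < 1 := by
  have : 0 < ‖x k‖ := norm_pos_iff.mpr (hc.signal_ne_zero he k)
  rw [hc.coherence_par he hk, div_lt_one (by positivity), hc.norm_signal_sq hk]
  linarith [pow_pos (norm_pos_iff.mpr (he k)) 2]

theorem coherence_par_pos {k : V} (hk : k ≠ r) (hg : g k ≠ 0) :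
    0 < coherence (x k) (x (par k)) := by
  have := norm_pos_iff.mpr hg
  have := norm_pos_iff.mpr (hc.signal_ne_zero he (par k))
  have := norm_pos_iff.mpr (hc.signal_ne_zero he k)
  rw [hc.coherence_par he hk]
  positivity

theorem coherence_eq_mul_coherence_par {i k : V} (hk : k ≠ r) (hki : k ∉ ancestors par i) :
    coherence (x k) (x i) = coherence (x k) (x (par k)) * coherence (x (par k)) (x i) := by
  have := norm_ne_zero_iff.mpr (hc.signal_ne_zero he (par k))
  rw [hc.coherence_par he hk, coherence, coherence, norm_inner_symm, hc.inner_signal_eq hk hki,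
    norm_mul, norm_inner_symm]
  field_simp

theorem coherence_lt_one {i j : V} (hij : i ≠ j) : coherence (x i) (x j) < 1 := by
  wlog hji : j ∉ ancestors par i generalizing i j
  · rw [coherence_comm]
    exact this hij.symm fun h => hij (hc.eq_of_mem_ancestors_of_mem_ancestors h (not_not.mp hji))
  have hj : j ≠ r := fun h => hji (h ▸ hc.root_mem_ancestors i)
  rw [coherence_comm, hc.coherence_eq_mul_coherence_par he hj hji]
  exact mul_lt_one_of_nonneg_of_lt_one_left (coherence_nonneg _ _)
    (hc.coherence_par_lt_one he hj) (coherence_le_one _ _)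

theorem coherence_eq_mul_of_mem_ancestors {a i k : V} (hai : a ∈ ancestors par i)
    (hak : a ∉ ancestors par k) :
    coherence (x i) (x k) = coherence (x i) (x a) * coherence (x a) (x k) := by
  revert hai
  refine hc.induction (P := fun i => a ∈ ancestors par i →
      coherence (x i) (x k) = coherence (x i) (x a) * coherence (x a) (x k))
    (fun h => absurd (hc.mem_ancestors_root_iff.mp h ▸ hc.root_mem_ancestors k) hak)
    (fun i hi ih hai => ?_) i
  rcases eq_or_ne a i with rfl | hne
  · rw [coherence_self (hc.signal_ne_zero he a), one_mul]
  have hik : i ∉ ancestors par k := fun h => hak (mem_ancestors_trans hai h)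
  have hia : i ∉ ancestors par a := fun h => hne (hc.eq_of_mem_ancestors_of_mem_ancestors hai h)
  rw [hc.coherence_eq_mul_coherence_par he hi hik, hc.coherence_eq_mul_coherence_par he hi hia,
    ih ((mem_ancestors_iff.mp hai).resolve_left hne), mul_assoc]

theorem coherence_lt_coherence_par {a i j : V} (hg : g a ≠ 0) (hai : a ∈ ancestors par i)
    (haj : a ∉ ancestors par j) (hne : (i, j) ≠ (a, par a)) :
    coherence (x i) (x j) < coherence (x a) (x (par a)) := by
  have ha : a ≠ r := fun h => haj (h ▸ hc.root_mem_ancestors j)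
  have hlt : coherence (x i) (x a) * coherence (x (par a)) (x j) < 1 := by
    rcases eq_or_ne i a with rfl | hia
    · rw [coherence_self (hc.signal_ne_zero he i), one_mul]
      exact hc.coherence_lt_one he fun h => hne (by rw [h])
    · exact mul_lt_one_of_nonneg_of_lt_one_left (coherence_nonneg _ _)
        (hc.coherence_lt_one he hia) (coherence_le_one _ _)
  calc coherence (x i) (x j)
      = coherence (x a) (x (par a)) * (coherence (x i) (x a) * coherence (x (par a)) (x j)) := by
        rw [hc.coherence_eq_mul_of_mem_ancestors he hai haj,
          hc.coherence_eq_mul_coherence_par he ha haj]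
        ring
    _ < coherence (x a) (x (par a)) := mul_lt_of_lt_one_right (hc.coherence_par_pos he ha hg) hlt

end IsCascade

end Cascade

section CoherenceDistance

open MeasureTheory

variable {H : Type*} [NormedAddCommGroup H] [InnerProductSpace ℂ H]

theorem intervalIntegrable_one_sub_coherence {f g : ℝ → H}
    (hm : Measurable fun ω => coherence (f ω) (g ω)) (a b : ℝ) :
    IntervalIntegrable (fun ω => 1 - coherence (f ω) (g ω)) volume a b := by
  refine (intervalIntegrable_const (c := (1 : ℝ))).mono_fun'
    (measurable_const.sub hm).aestronglyMeasurable (ae_of_all _ fun ω => ?_)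
  dsimp only
  rw [Real.norm_eq_abs, abs_of_nonneg (sub_nonneg.mpr (coherence_le_one _ _))]
  exact sub_le_self 1 (coherence_nonneg _ _)

theorem cohDist_lt_cohDist {f g f' g' : ℝ → H}
    (hm : Measurable fun ω => coherence (f ω) (g ω))
    (hm' : Measurable fun ω => coherence (f' ω) (g' ω))
    (hlt : ∀ ω, coherence (f' ω) (g' ω) < coherence (f ω) (g ω)) :
    cohDist f g < cohDist f' g' := by
  have hπ : -Real.pi < Real.pi := by linarith [Real.pi_pos]
  have hint := intervalIntegrable_one_sub_coherence hm (-Real.pi) Real.pi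
  have hint' := intervalIntegrable_one_sub_coherence hm' (-Real.pi) Real.pi
  have hgap := intervalIntegral.intervalIntegral_pos_of_pos (hint'.sub hint)
    (fun ω => by linarith [hlt ω]) hπ
  rw [intervalIntegral.integral_sub hint' hint, sub_pos] at hgap
  refine Real.sqrt_lt_sqrt (mul_nonneg (by positivity) ?_) (by gcongr)
  exact intervalIntegral.integral_nonneg hπ.le fun ω _ => sub_nonneg.mpr (coherence_le_one _ _)

end CoherenceDistance

theorem lcmt_unique_minimum_spanning_tree_general
    {H : Type*} [NormedAddCommGroup H] [InnerProductSpace ℂ H]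
    {V : Type*} [Fintype V]
    (r : V) (par : V → V)
    (hroot : par r = r)
    (hreach : ∀ j, ∃ n, par^[n] j = r)
    (h : V → ℝ → ℂ) (ρ : V → ℝ → H)
    (horth : ∀ (ω : ℝ) (a b : V), a ≠ b → ⟪ρ a ω, ρ b ω⟫_ℂ = 0)
    (hwp : ∀ (j : V) (ω : ℝ), ρ j ω ≠ 0)
    (X : V → ℝ → H)
    (hXr : ∀ ω, X r ω = ρ r ω)
    (hX : ∀ j, j ≠ r → ∀ ω, X j ω = h j ω • X (par j) ω + ρ j ω)
    (hnd : ∀ (m : V) (ω : ℝ), m ≠ r → h m ω ≠ 0)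
    (hmeas : ∀ i j : V, Measurable fun ω => coherence (X i ω) (X j ω))
    (T : SimpleGraph V) (hT : T = SimpleGraph.fromRel (fun a b => par a = b)) :
    ∀ T' : SimpleGraph V, T'.IsTree → T' ≠ T →
      graphWeight (fun a b => cohDist (X a) (X b))
          (fun a b => cohDist_symm (X a) (X b)) T <
      graphWeight (fun a b => cohDist (X a) (X b))
          (fun a b => cohDist_symm (X a) (X b)) T' := by
  subst hT
  have hr : IsRooted par r := ⟨hroot, hreach⟩
  have hc (ω : ℝ) : IsCascade par r (h · ω) (ρ · ω) (X · ω) :=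
    ⟨hr, fun a b hab => horth ω a b hab, hXr ω, fun j hj => hX j hj ω⟩
  intro T' hT' hne
  refine hr.isTree_parentGraph.graphWeight_lt_of_ne (fun e he i j hij hsep => ?_) hT' hne
  obtain ⟨a, ha, rfl⟩ := hr.exists_eq_of_mem_edgeSet_parentGraph he
  rw [hr.reachable_deleteEdges_parentGraph_iff] at hsep
  have key {i j : V} (hai : a ∈ ancestors par i) (haj : a ∉ ancestors par j)
      (hij : s(i, j) ≠ s(a, par a)) : cohDist (X a) (X (par a)) < cohDist (X i) (X j) :=
    cohDist_lt_cohDist (hmeas _ _) (hmeas _ _) fun ω =>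
      (hc ω).coherence_lt_coherence_par (hwp · ω) (hnd a ω ha) hai haj
        fun h => hij (by rw [Prod.mk.inj h |>.1, Prod.mk.inj h |>.2])
  rw [Sym2.lift_mk]
  by_cases hai : a ∈ ancestors par i
  · exact key hai (fun haj => hsep (iff_of_true hai haj)) hij
  · rw [cohDist_symm]
    exact key (by tauto) hai (by rwa [Sym2.eq_swap])

/-- main theorem of the paper: the tree underlying a well-posed
LCMT whose transfer functions never vanish is recovered exactly as the unique
minimum spanning tree of the coherence-based distances among its signals: every
other tree on the node set has strictly larger total coherence distance. -/
theorem lcmt_unique_minimum_spanning_tree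
    {H : Type*} [NormedAddCommGroup H] [InnerProductSpace ℂ H]
    {V : Type*} [Fintype V]
    (r : V) (par : V → V)
    (hroot : par r = r)
    (hpar : ∀ j, j ≠ r → par j ≠ j)
    (hreach : ∀ j, ∃ n, par^[n] j = r)
    (h : V → ℝ → ℂ) (ρ : V → ℝ → H)
    (horth : ∀ (ω : ℝ) (a b : V), a ≠ b → ⟪ρ a ω, ρ b ω⟫_ℂ = 0)
    (hwp : ∀ (j : V) (ω : ℝ), ρ j ω ≠ 0)
    (X : V → ℝ → H)
    (hXr : ∀ ω, X r ω = ρ r ω)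
    (hX : ∀ j, j ≠ r → ∀ ω, X j ω = h j ω • X (par j) ω + ρ j ω)
    (hnd : ∀ (m : V) (ω : ℝ), m ≠ r → h m ω ≠ 0)
    (hmeas : ∀ i j : V, Measurable fun ω => coherence (X i ω) (X j ω))
    (T : SimpleGraph V) (hT : T = SimpleGraph.fromRel (fun a b => par a = b)) :
    ∀ T' : SimpleGraph V, T'.IsTree → T' ≠ T →
      graphWeight (fun a b => cohDist (X a) (X b))
          (fun a b => cohDist_symm (X a) (X b)) T <
      graphWeight (fun a b => cohDist (X a) (X b))
          (fun a b => cohDist_symm (X a) (X b)) T' :=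
  lcmt_unique_minimum_spanning_tree_general r par hroot hreach h ρ horth hwp X hXr hX hnd hmeas T hT
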